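/- A norm on the space of finitely supported complex sequences which is permutation-invariant and multiplicative is unconditional: if x and y are finitely supported complex sequences with |x_i| = |y_i| for every i, then ‖x‖ = ‖y‖. -/

import Mathlib

/-- Tensor product of finitely supported complex sequences, regarded as a
finitely supported sequence via a fixed bijection `e : ℕ ≃ ℕ × ℕ`. -/
noncomputable def tensorC (e : ℕ ≃ ℕ × ℕ) (x y : ℕ →₀ ℂ) : ℕ →₀ ℂ :=
  Finsupp.onFinset ((x.support ×ˢ y.support).image e.symm)
    (fun n => x (e n).1 * y (e n).2)
    (fun n h => by
      simp only [Finset.mem_image, Finset.mem_product]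
      exact ⟨e n, ⟨Finsupp.mem_support_iff.2 (left_ne_zero_of_mul h),
        Finsupp.mem_support_iff.2 (right_ne_zero_of_mul h)⟩, e.symm_apply_apply n⟩)

/-!
Multiplying the coordinates of `x` by powers `ζ ^ kᵢ` of an `m`-th root of unity does not change
`N x`: with `v = (1, ζ, …, ζ ^ (m - 1))`, the vectors `x ⊗ v` and `(ζ ^ kᵢ xᵢ)ᵢ ⊗ v` differ by a
permutation (rotate the `i`-th block of `v` by `kᵢ`), so multiplicativity and permutation
invariance give `N x * N v = N y * N v` with `N v ≠ 0`. Arbitrary unimodular phases are within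
`2π / m` of such roots, and `N z ≤ ∑ |zᵢ| N(eᵢ)` makes `N` continuous in the coefficients.
-/

open Complex Finsupp Real

theorem Seminorm.le_sum_norm_mul_single_one {ι 𝕜 : Type*} [NormedField 𝕜]
    (p : Seminorm 𝕜 (ι →₀ 𝕜)) {z : ι →₀ 𝕜} {s : Finset ι} (hs : z.support ⊆ s) :
    p z ≤ ∑ i ∈ s, ‖z i‖ * p (single i 1) := by
  have hz : z = ∑ i ∈ s, z i • single i 1 := by
    simp_rw [smul_single_one]
    rw [← sum_of_support_subset z hs _ fun _ _ => single_zero _, sum_single]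
  calc p z ≤ ∑ i ∈ s, p (z i • single i 1) := by
        conv_lhs => rw [hz]
        exact Finset.le_sum_of_subadditive p (map_zero p).le (map_add_le_add p) _ _
    _ = ∑ i ∈ s, ‖z i‖ * p (single i 1) := by simp_rw [map_smul_eq_mul]

theorem exists_nat_abs_sub_mul_le {t δ : ℝ} (ht : 0 ≤ t) (hδ : 0 < δ) :
    ∃ k : ℕ, |t - k * δ| ≤ δ := by
  refine ⟨⌊t / δ⌋₊, abs_le.2 ⟨?_, ?_⟩⟩
  · have := Nat.floor_le (div_nonneg ht hδ.le)
    rw [le_div_iff₀ hδ] at this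
    linarith
  · have := Nat.lt_floor_add_one (t / δ)
    rw [div_lt_iff₀ hδ] at this
    linarith

theorem exists_norm_sub_exp_pow_le {m : ℕ} (hm : 0 < m) {ω : ℂ} (hω : ‖ω‖ = 1) :
    ∃ k : ℕ, ‖ω - exp (2 * π * I / m) ^ k‖ ≤ 2 * π / m := by
  set t := arg ω + 2 * π
  obtain ⟨k, hk⟩ := exists_nat_abs_sub_mul_le
    (by linarith [neg_pi_lt_arg ω, Real.pi_pos] : 0 ≤ t) (by positivity : 0 < 2 * π / m)
  set s := k * (2 * π / m)
  have hωt : ω = exp (I * t) := by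
    calc ω = exp (arg ω * I) := by simpa [hω] using (norm_mul_exp_arg_mul_I ω).symm
      _ = exp ((arg ω + 2 * π) * I) := (exp_mul_I_periodic _).symm
      _ = exp (I * t) := by push_cast [t]; ring_nf
  have hζs : exp (2 * π * I / m) ^ k = exp (I * s) := by
    rw [← Complex.exp_nat_mul]; push_cast [s]; ring_nf
  refine ⟨k, ?_⟩
  calc ‖ω - exp (2 * π * I / m) ^ k‖ = ‖exp (I * s) * (exp (I * ↑(t - s)) - 1)‖ := by
        rw [hωt, hζs, mul_sub, mul_one, ← Complex.exp_add]; push_cast; ring_nf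
    _ = ‖exp (I * ↑(t - s)) - 1‖ := by rw [norm_mul, norm_exp_I_mul_ofReal, one_mul]
    _ ≤ 2 * π / m := Real.norm_exp_I_mul_ofReal_sub_one_le.trans hk

theorem exists_norm_sub_exp_pow_mul_le {m : ℕ} (hm : 0 < m) {a b : ℂ} (hab : ‖a‖ = ‖b‖) :
    ∃ k : ℕ, ‖b - exp (2 * π * I / m) ^ k * a‖ ≤ 2 * π / m * ‖a‖ := by
  rcases eq_or_ne a 0 with rfl | ha
  · obtain rfl : b = 0 := norm_eq_zero.1 (by simpa using hab.symm)
    exact ⟨0, by simp⟩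
  obtain ⟨k, hk⟩ := exists_norm_sub_exp_pow_le hm (ω := b / a) (by
    rw [norm_div, ← hab, div_self (norm_ne_zero_iff.2 ha)])
  refine ⟨k, ?_⟩
  calc ‖b - exp (2 * π * I / m) ^ k * a‖ = ‖b / a - exp (2 * π * I / m) ^ k‖ * ‖a‖ := by
        rw [← norm_mul, sub_mul, div_mul_cancel₀ _ ha]
    _ ≤ 2 * π / m * ‖a‖ := mul_le_mul_of_nonneg_right hk (norm_nonneg _)

noncomputable def rootVec (m : ℕ) (ζ : ℂ) : ℕ →₀ ℂ :=
  onFinset (Finset.range m) (fun j => if j < m then ζ ^ j else 0)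
    (fun j h => Finset.mem_range.2 (by by_contra hc; exact h (if_neg hc)))

@[simp]
theorem rootVec_apply (m : ℕ) (ζ : ℂ) (j : ℕ) :
    rootVec m ζ j = if j < m then ζ ^ j else 0 := rfl

theorem rootVec_ne_zero {m : ℕ} (hm : 0 < m) (ζ : ℂ) : rootVec m ζ ≠ 0 :=
  fun h => by simpa [hm] using DFunLike.congr_fun h 0

theorem exists_perm_rootVec_comp_eq_pow_mul {m : ℕ} {ζ : ℂ} (hζ : ζ ^ m = 1) (k : ℕ) :
    ∃ τ : Equiv.Perm ℕ, ∀ j, rootVec m ζ (τ j) = ζ ^ k * rootVec m ζ j := by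
  obtain _ | n := m
  · exact ⟨1, by simp⟩
  refine ⟨(Equiv.addRight (Fin.ofNat (n + 1) k)).extendDomain Fin.equivSubtype, fun j => ?_⟩
  by_cases hj : j < n + 1
  · rw [Equiv.Perm.extendDomain_apply_subtype _ Fin.equivSubtype hj]
    simp [hj, Fin.val_add, Fin.equivSubtype, Nat.lt_succ_iff.1 (Nat.mod_lt _ n.succ_pos),
      ← pow_eq_pow_mod _ hζ, pow_add, mul_comm]
  · rw [Equiv.Perm.extendDomain_apply_not_subtype _ Fin.equivSubtype hj]
    simp [hj]

theorem tensorC_apply (e : ℕ ≃ ℕ × ℕ) (x y : ℕ →₀ ℂ) (n : ℕ) :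
    tensorC e x y n = x (e n).1 * y (e n).2 := rfl

theorem exists_perm_equivMapDomain_tensorC_eq (e : ℕ ≃ ℕ × ℕ) {x y v w : ℕ →₀ ℂ}
    (h : ∀ i, ∃ τ : Equiv.Perm ℕ, ∀ j, x i * v (τ j) = y i * w j) :
    ∃ σ : Equiv.Perm ℕ, equivMapDomain σ (tensorC e x v) = tensorC e y w := by
  choose τ hτ using h
  refine ⟨e.trans ((Equiv.prodShear (Equiv.refl ℕ) fun i => (τ i).symm).trans e.symm), ?_⟩
  ext n
  simp [equivMapDomain_apply, tensorC_apply, hτ]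

theorem eq_of_apply_eq_pow_mul (e : ℕ ≃ ℕ × ℕ) {N : (ℕ →₀ ℂ) → ℝ}
    (hdef : ∀ x, N x = 0 → x = 0)
    (hperm : ∀ (σ : Equiv.Perm ℕ) (x), N (equivMapDomain σ x) = N x)
    (hmul : ∀ x y, N (tensorC e x y) = N x * N y) {m : ℕ} (hm : 0 < m) {ζ : ℂ}
    (hζ : ζ ^ m = 1) {k : ℕ → ℕ} {x y : ℕ →₀ ℂ} (hxy : ∀ i, y i = ζ ^ k i * x i) :
    N y = N x := by
  obtain ⟨σ, hσ⟩ := exists_perm_equivMapDomain_tensorC_eq e (x := x) (y := y)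
    (v := rootVec m ζ) (w := rootVec m ζ) fun i => by
      obtain ⟨τ, hτ⟩ := exists_perm_rootVec_comp_eq_pow_mul hζ (k i)
      exact ⟨τ, fun j => by rw [hτ, hxy]; ring⟩
  have h : N y * N (rootVec m ζ) = N x * N (rootVec m ζ) := by
    rw [← hmul, ← hσ, hperm, hmul]
  exact mul_right_cancel₀ (fun h0 => rootVec_ne_zero hm ζ (hdef _ h0)) h

theorem Seminorm.eq_of_norm_apply_eq {ι : Type*} (p : Seminorm ℂ (ι →₀ ℂ))
    (hrot : ∀ m : ℕ, 0 < m → ∀ (k : ι → ℕ) (x y : ι →₀ ℂ),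
      (∀ i, y i = exp (2 * π * I / m) ^ k i * x i) → p y = p x)
    {x y : ι →₀ ℂ} (hxy : ∀ i, ‖x i‖ = ‖y i‖) : p x = p y := by
  set S := ∑ i ∈ x.support, ‖x i‖ * p (single i 1)
  have hclose : ∀ m : ℕ, 0 < m → |p y - p x| ≤ 2 * π * S / m := by
    intro m hm
    choose k hk using fun i => exists_norm_sub_exp_pow_mul_le hm (hxy i)
    set y' := onFinset x.support (fun i => exp (2 * π * I / m) ^ k i * x i)
      fun i h => mem_support_iff.2 (right_ne_zero_of_mul h)
    have hsupp : (y - y').support ⊆ x.support := fun i hi => by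
      rw [mem_support_iff] at hi ⊢
      intro hx
      exact hi (by simpa [y', hx] using hk i)
    calc |p y - p x| = |p y - p y'| := by rw [hrot m hm k x y' fun i => rfl]
      _ ≤ p (y - y') := abs_sub_map_le_sub p y y'
      _ ≤ ∑ i ∈ x.support, ‖(y - y') i‖ * p (single i 1) := p.le_sum_norm_mul_single_one hsupp
      _ ≤ ∑ i ∈ x.support, 2 * π / m * ‖x i‖ * p (single i 1) :=
        Finset.sum_le_sum fun i _ => mul_le_mul_of_nonneg_right (hk i) (apply_nonneg p _)
      _ = 2 * π * S / m := by
        rw [Finset.mul_sum, Finset.sum_div]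
        exact Finset.sum_congr rfl fun i _ => by ring
  have h0 : |p y - p x| ≤ 0 := ge_of_tendsto (tendsto_const_div_atTop_nhds_zero_nat _)
    ((Filter.eventually_gt_atTop 0).mono hclose)
  exact (sub_eq_zero.1 (abs_nonpos_iff.1 h0)).symm

/-- A permutation-invariant multiplicative norm on the finitely supported
complex sequences is unconditional. -/
theorem unconditional_of_perm_invariant_multiplicative_complex
    (e : ℕ ≃ ℕ × ℕ) (N : (ℕ →₀ ℂ) → ℝ)
    (hadd : ∀ x y, N (x + y) ≤ N x + N y)
    (hsmul : ∀ (c : ℂ) (x), N (c • x) = ‖c‖ * N x)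
    (hdef : ∀ x, N x = 0 ↔ x = 0)
    (hperm : ∀ (σ : Equiv.Perm ℕ) (x), N (Finsupp.equivMapDomain σ x) = N x)
    (hmul : ∀ x y, N (tensorC e x y) = N x * N y) :
    ∀ x y : ℕ →₀ ℂ, (∀ i, ‖x i‖ = ‖y i‖) → N x = N y :=
  fun _ _ hxy => (Seminorm.of N hadd hsmul).eq_of_norm_apply_eq
    (fun m hm _ _ _ h => eq_of_apply_eq_pow_mul e (fun x => (hdef x).1) hperm hmul hm
      (isPrimitiveRoot_exp m hm.ne').pow_eq_one h) hxy
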